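/- Let A be a matrix with n columns, H ∈ ℝ^{n×n} a normalized Walsh–Hadamard matrix, and D ∈ ℝ^{n×n} a diagonal matrix whose diagonal entries are independent Rademacher (±1) random variables. Then for every t ≥ 0, with probability at least 1 − n·e^{−t²/8}, every column of A D Hᵀ has Euclidean norm at most n^{−1/2}‖A‖_F + t n^{−1/2}‖A‖₂. -/

import Mathlib

open Matrix

/-- Spectral norm (largest singular value) of a real matrix. -/
noncomputable def specNorm {m n : ℕ} (A : Matrix (Fin m) (Fin n) ℝ) : ℝ :=
  ‖LinearMap.toContinuousLinearMap (Matrix.toEuclideanLin A)‖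

/-- Frobenius norm of a real matrix. -/
noncomputable def frobNorm {m n : ℕ} (A : Matrix (Fin m) (Fin n) ℝ) : ℝ :=
  Real.sqrt (∑ i, ∑ j, (A i j) ^ 2)

/-- Euclidean norm of a vector in `ℝ^n`. -/
noncomputable def vnorm {n : ℕ} (v : Fin n → ℝ) : ℝ :=
  Real.sqrt (∑ i, (v i) ^ 2)

/-- The sign vector `±1` associated with a Boolean vector. -/
def signVec {n : ℕ} (s : Fin n → Bool) : Fin n → ℝ :=
  fun i => if s i then 1 else -1

/-!
Column `j` of `A D Hᵀ` is `B σ` with `B = A diag(H j)` and `σ` the uniform random sign vector;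
`‖B‖_F = n^{-1/2}‖A‖_F` and `‖B‖₂ ≤ n^{-1/2}‖A‖₂`. By a union bound over the `n` columns it
suffices that `‖B σ‖ > ‖B‖_F + t‖B‖₂` has probability at most `e^{-t²/8}`.

The function `f σ = ‖B σ‖` is convex, so flipping sign `i` decreases it by at most `2 |∂ᵢ f σ|`,
where `∇ f σ = Bᵀ B σ / ‖B σ‖` has norm at most `‖B‖₂`; hence `∑ᵢ (f σ - f σ⁽ⁱ⁾)₊² ≤ 4‖B‖₂²`, and
`E f ≤ (E f²)^{1/2} = ‖B‖_F`. Tensorization of entropy over the cube `{±1}ⁿ` together with a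
two-point inequality gives the modified log-Sobolev inequality
`Ent(e^{λ f}) ≤ 2‖B‖₂² λ² E e^{λ f}` for `λ ≥ 0`; the Herbst argument turns it into
`E e^{λ f} ≤ e^{λ E f + 2‖B‖₂² λ²}`, and Chernoff's bound gives the tail `e^{-t²/8}`.
-/

open Real Finset

/-- The entropy of `(y, z)` under the uniform probability measure on two points. -/
noncomputable def twoPointEnt (y z : ℝ) : ℝ :=
  (y * log y + z * log z) / 2 - (y + z) / 2 * log ((y + z) / 2)

lemma twoPointEnt_comm (y z : ℝ) : twoPointEnt y z = twoPointEnt z y := by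
  simp only [twoPointEnt, add_comm y z, add_comm (y * log y)]

lemma twoPointEnt_mul {k y z : ℝ} (hk : 0 < k) (hy : 0 < y) (hz : 0 < z) :
    twoPointEnt (k * y) (k * z) = k * twoPointEnt y z := by
  have hyz : (y + z) / 2 ≠ 0 := by positivity
  simp only [twoPointEnt, ← mul_add, mul_div_assoc,
    log_mul hk.ne' hy.ne', log_mul hk.ne' hz.ne', log_mul hk.ne' hyz]
  ring

lemma add_mul_log_div_add_le {a₁ a₂ b₁ b₂ : ℝ} (ha₁ : 0 ≤ a₁) (ha₂ : 0 ≤ a₂)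
    (hb₁ : 0 < b₁) (hb₂ : 0 < b₂) :
    (a₁ + a₂) * log ((a₁ + a₂) / (b₁ + b₂)) ≤
      a₁ * log (a₁ / b₁) + a₂ * log (a₂ / b₂) := by
  have hb : 0 < b₁ + b₂ := add_pos hb₁ hb₂
  have hconv := convexOn_mul_log.2 (Set.mem_Ici.2 (div_nonneg ha₁ hb₁.le))
    (Set.mem_Ici.2 (div_nonneg ha₂ hb₂.le)) (div_nonneg hb₁.le hb.le)
    (div_nonneg hb₂.le hb.le) (by rw [← add_div, div_self hb.ne'])
  have hmean : b₁ / (b₁ + b₂) * (a₁ / b₁) + b₂ / (b₁ + b₂) * (a₂ / b₂) =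
      (a₁ + a₂) / (b₁ + b₂) := by
    field_simp
  simp only [smul_eq_mul, hmean] at hconv
  have hb₁' := hb₁.ne'
  have hb₂' := hb₂.ne'
  have hb' := hb.ne'
  generalize log ((a₁ + a₂) / (b₁ + b₂)) = L at hconv ⊢
  generalize log (a₁ / b₁) = L₁ at hconv ⊢
  generalize log (a₂ / b₂) = L₂ at hconv ⊢
  calc (a₁ + a₂) * L = (b₁ + b₂) * ((a₁ + a₂) / (b₁ + b₂) * L) := by field_simp
    _ ≤ (b₁ + b₂) * (b₁ / (b₁ + b₂) * (a₁ / b₁ * L₁) + b₂ / (b₁ + b₂) * (a₂ / b₂ * L₂)) :=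
      mul_le_mul_of_nonneg_left hconv hb.le
    _ = a₁ * L₁ + a₂ * L₂ := by field_simp

lemma twoPointEnt_eq {y z : ℝ} (hy : 0 < y) (hz : 0 < z) :
    twoPointEnt y z = (y * log (y / (y + z)) + z * log (z / (y + z))) / 2
      + (y + z) / 2 * log 2 := by
  have hyz : 0 < y + z := by positivity
  simp only [twoPointEnt]
  rw [log_div hy.ne' hyz.ne', log_div hz.ne' hyz.ne', log_div hyz.ne' two_ne_zero]
  ring

lemma twoPointEnt_midpoint_le {y₁ y₂ z₁ z₂ : ℝ} (hy₁ : 0 < y₁) (hy₂ : 0 < y₂)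
    (hz₁ : 0 < z₁) (hz₂ : 0 < z₂) :
    twoPointEnt ((y₁ + y₂) / 2) ((z₁ + z₂) / 2) ≤ (twoPointEnt y₁ z₁ + twoPointEnt y₂ z₂) / 2 := by
  have hy := add_mul_log_div_add_le hy₁.le hy₂.le (add_pos hy₁ hz₁) (add_pos hy₂ hz₂)
  have hz := add_mul_log_div_add_le hz₁.le hz₂.le (add_pos hy₁ hz₁) (add_pos hy₂ hz₂)
  rw [twoPointEnt_eq (by positivity) (by positivity), twoPointEnt_eq hy₁ hz₁,
    twoPointEnt_eq hy₂ hz₂]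
  have hnorm : ∀ w, w / 2 / ((y₁ + y₂) / 2 + (z₁ + z₂) / 2) = w / (y₁ + z₁ + (y₂ + z₂)) := by
    intro w
    field_simp
    ring
  rw [hnorm, hnorm]
  linarith

lemma twoPointEnt_exp_one_le {d : ℝ} (hd : 0 ≤ d) :
    twoPointEnt (exp d) 1 ≤ d ^ 2 / 4 * exp d := by
  set φ : ℝ → ℝ := fun d => d ^ 2 / 4 * exp d - twoPointEnt (exp d) 1 with hφ
  have hφ' : ∀ x, HasDerivAt φ (exp x * (x ^ 2 / 4 + log ((exp x + 1) / 2) / 2)) x := by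
    intro x
    have hpos : (exp x + 1) / 2 ≠ 0 := by positivity
    have hmean : HasDerivAt (fun x => (exp x + 1) / 2) (exp x / 2) x :=
      ((hasDerivAt_exp x).add_const 1).div_const 2
    have := (((hasDerivAt_pow 2 x).div_const 4).mul (hasDerivAt_exp x)).sub
      ((((hasDerivAt_id x).mul (hasDerivAt_exp x)).div_const 2).sub (hmean.mul (hmean.log hpos)))
    refine (this.congr_deriv ?_).congr_of_eventuallyEq (.of_forall fun y => ?_)
    · simp only [id]
      field_simp
      ring
    · simp [hφ, twoPointEnt, mul_comm]
  have hmono : MonotoneOn φ (Set.Ici 0) := by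
    refine monotoneOn_of_deriv_nonneg (convex_Ici 0)
      (fun x _ => (hφ' x).continuousAt.continuousWithinAt)
      (fun x _ => (hφ' x).differentiableAt.differentiableWithinAt) fun x hx => ?_
    rw [(hφ' x).deriv]
    have : 0 ≤ log ((exp x + 1) / 2) :=
      log_nonneg (by linarith [one_le_exp (interior_subset hx : x ∈ Set.Ici 0)])
    positivity
  have := hmono Set.self_mem_Ici hd hd
  simp [hφ, twoPointEnt] at this ⊢
  linarith

lemma twoPointEnt_exp_le_of_le {u v : ℝ} (h : v ≤ u) :
    twoPointEnt (exp u) (exp v) ≤ (u - v) ^ 2 / 4 * exp u := by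
  have hu : exp u = exp v * exp (u - v) := by rw [← exp_add, add_sub_cancel]
  calc twoPointEnt (exp u) (exp v)
      = exp v * twoPointEnt (exp (u - v)) 1 := by
        rw [← twoPointEnt_mul (exp_pos v) (exp_pos _) one_pos, mul_one, ← hu]
    _ ≤ exp v * ((u - v) ^ 2 / 4 * exp (u - v)) :=
        mul_le_mul_of_nonneg_left (twoPointEnt_exp_one_le (sub_nonneg.2 h)) (exp_pos v).le
    _ = (u - v) ^ 2 / 4 * exp u := by rw [hu]; ring

lemma twoPointEnt_exp_le (u v : ℝ) :
    twoPointEnt (exp u) (exp v) ≤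
      max (u - v) 0 ^ 2 / 4 * exp u + max (v - u) 0 ^ 2 / 4 * exp v := by
  rcases le_total v u with h | h
  · rw [max_eq_left (sub_nonneg.2 h), max_eq_right (sub_nonpos.2 h)]
    simpa using twoPointEnt_exp_le_of_le h
  · rw [max_eq_right (sub_nonpos.2 h), max_eq_left (sub_nonneg.2 h), twoPointEnt_comm]
    simpa using twoPointEnt_exp_le_of_le h

lemma le_deriv_zero_mul_of_mul_deriv_le {u u' : ℝ → ℝ} (hu : ∀ x, HasDerivAt u (u' x) x)
    (h0 : u 0 = 0) (hu' : ∀ x, 0 < x → x * u' x ≤ u x) {x : ℝ} (hx : 0 ≤ x) :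
    u x ≤ u' 0 * x := by
  rcases hx.eq_or_lt with rfl | hx
  · simp [h0]
  -- `u y / y` is antitone on `(0, ∞)` and tends to `u' 0` as `y → 0⁺`.
  have hw : ∀ y, 0 < y → HasDerivAt (fun y => u y / y) ((y * u' y - u y) / y ^ 2) y :=
    fun y hy => ((hu y).div (hasDerivAt_id y) hy.ne').congr_deriv (by simp [mul_comm])
  have hanti : AntitoneOn (fun y => u y / y) (Set.Ioi 0) := by
    refine antitoneOn_of_deriv_nonpos (convex_Ioi 0)
      (fun y hy => (hw y hy).continuousAt.continuousWithinAt)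
      (fun y hy => (hw y (interior_subset hy)).differentiableAt.differentiableWithinAt)
      fun y hy => ?_
    rw [interior_Ioi] at hy
    rw [(hw y hy).deriv]
    exact div_nonpos_of_nonpos_of_nonneg (sub_nonpos.2 (hu' y hy)) (sq_nonneg y)
  have hslope : Filter.Tendsto (fun y => u y / y) (nhdsWithin 0 (Set.Ioi 0)) (nhds (u' 0)) := by
    have := (hasDerivAt_iff_tendsto_slope.1 (hu 0)).mono_left
      (nhdsWithin_mono 0 fun y (hy : 0 < y) => hy.ne')
    refine this.congr' (Filter.Eventually.of_forall fun y => ?_)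
    simp [slope_def_field, h0]
  have hle : u x / x ≤ u' 0 := by
    refine ge_of_tendsto hslope ?_
    filter_upwards [Ioc_mem_nhdsGT hx] with y hy
    exact hanti hy.1 hx hy.2
  rwa [div_le_iff₀ hx] at hle

lemma card_lt_mul_exp_le_sum_exp {α : Type*} [Fintype α] (f : α → ℝ) (a : ℝ) {l : ℝ}
    (hl : 0 ≤ l) :
    (#{x | a < f x} : ℝ) * exp (l * a) ≤ ∑ x, exp (l * f x) := by
  calc (#{x | a < f x} : ℝ) * exp (l * a) ≤ ∑ x with a < f x, exp (l * f x) := by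
        rw [← nsmul_eq_mul]
        exact Finset.card_nsmul_le_sum _ _ _ fun x hx =>
          exp_le_exp.2 (mul_le_mul_of_nonneg_left (Finset.mem_filter.1 hx).2.le hl)
    _ ≤ ∑ x, exp (l * f x) :=
        Finset.sum_le_sum_of_subset_of_nonneg (Finset.filter_subset _ _)
          fun x _ _ => (exp_pos _).le

lemma norm_sub_norm_mul_norm_le_inner {E : Type*} [NormedAddCommGroup E] [InnerProductSpace ℝ E]
    (a b : E) : (‖a‖ - ‖b‖) * ‖a‖ ≤ inner ℝ a (a - b) := by
  rw [inner_sub_right, real_inner_self_eq_norm_sq]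
  nlinarith [real_inner_le_norm a b]

lemma card_sub_mul_le_card_forall {α ι : Type*} [Fintype α] [Fintype ι] (P : ι → α → Prop)
    [∀ i x, Decidable (P i x)] {δ : ℝ} (h : ∀ i, (#{x | ¬ P i x} : ℝ) ≤ δ) :
    (Fintype.card α : ℝ) - Fintype.card ι * δ ≤ #{x | ∀ i, P i x} := by
  classical
  have hunion : (#{x | ¬ ∀ i, P i x} : ℝ) ≤ Fintype.card ι * δ := by
    calc (#{x | ¬ ∀ i, P i x} : ℝ) ≤ #(univ.biUnion fun i => {x | ¬ P i x}) := by
          gcongr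
          intro x
          simp [not_forall]
      _ ≤ ∑ i, (#{x | ¬ P i x} : ℝ) := by exact_mod_cast card_biUnion_le
      _ ≤ Fintype.card ι * δ := (Finset.sum_le_sum fun i _ => h i).trans_eq (by simp)
  have hsplit := Finset.card_filter_add_card_filter_not (s := univ) (fun x => ∀ i, P i x)
  rw [card_univ] at hsplit
  have hsplit' : (#{x | ∀ i, P i x} : ℝ) + #{x | ¬ ∀ i, P i x} = Fintype.card α := by
    exact_mod_cast hsplit
  linarith

namespace BoolCube

variable {n : ℕ}

def flipAt (i : Fin n) (x : Fin n → Bool) : Fin n → Bool :=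
  Function.update x i (!x i)

lemma flipAt_involutive (i : Fin n) : Function.Involutive (flipAt i) := by
  intro x
  simp [flipAt]

lemma sum_comp_flipAt {M : Type*} [AddCommMonoid M] (i : Fin n) (g : (Fin n → Bool) → M) :
    ∑ x, g (flipAt i x) = ∑ x, g x :=
  Equiv.sum_comp (flipAt_involutive i).toPerm g

lemma flipAt_zero_cons (a : Bool) (y : Fin n → Bool) :
    flipAt 0 (Fin.cons a y : Fin (n + 1) → Bool) = Fin.cons (!a) y := by
  rw [flipAt, Fin.cons_zero, Fin.update_cons_zero]

lemma flipAt_succ_cons (i : Fin n) (a : Bool) (y : Fin n → Bool) :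
    flipAt i.succ (Fin.cons a y : Fin (n + 1) → Bool) = Fin.cons a (flipAt i y) := by
  rw [flipAt, Fin.cons_succ, ← Fin.cons_update, flipAt]

lemma sum_cons {M : Type*} [AddCommMonoid M] (g : (Fin (n + 1) → Bool) → M) :
    ∑ x, g x = ∑ y : Fin n → Bool, (g (Fin.cons true y) + g (Fin.cons false y)) := by
  rw [← (Fin.consEquiv fun _ => Bool).sum_comp, Fintype.sum_prod_type, Fintype.sum_bool,
    ← Finset.sum_add_distrib]
  rfl

/-- `2 ^ n` times the entropy of `h` with respect to the uniform measure on the cube. -/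
noncomputable def ent (h : (Fin n → Bool) → ℝ) : ℝ :=
  ∑ x, h x * log (h x) - (∑ x, h x) * log ((∑ x, h x) / 2 ^ n)

noncomputable def avgFirst (h : (Fin (n + 1) → Bool) → ℝ) (y : Fin n → Bool) : ℝ :=
  (h (Fin.cons true y) + h (Fin.cons false y)) / 2

/-- The chain rule for entropy. -/
lemma ent_eq_sum_twoPointEnt_add (h : (Fin (n + 1) → Bool) → ℝ) :
    ent h = ∑ y, 2 * twoPointEnt (h (Fin.cons true y)) (h (Fin.cons false y)) +
      2 * ent (avgFirst h) := by
  have hsum : ∑ x, h x = 2 * ∑ y, avgFirst h y := by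
    rw [sum_cons, Finset.mul_sum]
    exact Finset.sum_congr rfl fun y _ => by simp only [avgFirst]; ring
  have hnorm : (2 * ∑ y, avgFirst h y) / 2 ^ (n + 1) = (∑ y, avgFirst h y) / 2 ^ n := by
    rw [pow_succ, mul_comm _ 2, mul_div_mul_left _ _ two_ne_zero]
  have hpair : ∀ y, 2 * twoPointEnt (h (Fin.cons true y)) (h (Fin.cons false y)) =
      h (Fin.cons true y) * log (h (Fin.cons true y)) +
        h (Fin.cons false y) * log (h (Fin.cons false y)) -
          2 * (avgFirst h y * log (avgFirst h y)) := by
    intro y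
    simp only [twoPointEnt, avgFirst]
    ring
  simp only [ent, hsum, hnorm, Finset.sum_congr rfl fun y _ => hpair y,
    Finset.sum_sub_distrib, ← Finset.mul_sum, sum_cons fun x => h x * log (h x)]
  ring

lemma sum_twoPointEnt_flipAt_zero (h : (Fin (n + 1) → Bool) → ℝ) :
    ∑ x, twoPointEnt (h x) (h (flipAt 0 x)) =
      ∑ y, 2 * twoPointEnt (h (Fin.cons true y)) (h (Fin.cons false y)) := by
  rw [sum_cons]
  refine Finset.sum_congr rfl fun y _ => ?_
  rw [flipAt_zero_cons, flipAt_zero_cons, Bool.not_true, Bool.not_false,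
    twoPointEnt_comm (h (Fin.cons false y))]
  ring

lemma two_mul_sum_twoPointEnt_avgFirst_le (h : (Fin (n + 1) → Bool) → ℝ) (hpos : ∀ x, 0 < h x)
    (i : Fin n) :
    2 * ∑ y, twoPointEnt (avgFirst h y) (avgFirst h (flipAt i y)) ≤
      ∑ x, twoPointEnt (h x) (h (flipAt i.succ x)) := by
  rw [sum_cons, Finset.mul_sum]
  refine Finset.sum_le_sum fun y _ => ?_
  rw [flipAt_succ_cons, flipAt_succ_cons]
  unfold avgFirst
  linarith [twoPointEnt_midpoint_le (hpos (Fin.cons true y)) (hpos (Fin.cons false y))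
    (hpos (Fin.cons true (flipAt i y))) (hpos (Fin.cons false (flipAt i y)))]

theorem ent_le_sum_twoPointEnt (h : (Fin n → Bool) → ℝ) (hpos : ∀ x, 0 < h x) :
    ent h ≤ ∑ i, ∑ x, twoPointEnt (h x) (h (flipAt i x)) := by
  induction n with
  | zero => simp [ent]
  | succ n ih =>
    have havg : ∀ y, 0 < avgFirst h y := fun y => by
      have := hpos (Fin.cons true y)
      have := hpos (Fin.cons false y)
      unfold avgFirst
      positivity
    calc ent h = ∑ y, 2 * twoPointEnt (h (Fin.cons true y)) (h (Fin.cons false y)) +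
          2 * ent (avgFirst h) := ent_eq_sum_twoPointEnt_add h
      _ ≤ ∑ x, twoPointEnt (h x) (h (flipAt 0 x)) +
          ∑ i : Fin n, 2 * ∑ y, twoPointEnt (avgFirst h y) (avgFirst h (flipAt i y)) := by
        rw [sum_twoPointEnt_flipAt_zero, add_le_add_iff_left, ← Finset.mul_sum]
        exact mul_le_mul_of_nonneg_left (ih _ havg) zero_le_two
      _ ≤ ∑ i, ∑ x, twoPointEnt (h x) (h (flipAt i x)) := by
        rw [Fin.sum_univ_succ]
        gcongr with i
        exact two_mul_sum_twoPointEnt_avgFirst_le h hpos i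

noncomputable def gradPosSq (f : (Fin n → Bool) → ℝ) (x : Fin n → Bool) : ℝ :=
  ∑ i, max (f x - f (flipAt i x)) 0 ^ 2

theorem ent_exp_mul_le (f : (Fin n → Bool) → ℝ) {C : ℝ} (hgrad : ∀ x, gradPosSq f x ≤ C)
    {l : ℝ} (hl : 0 ≤ l) :
    ent (fun x => exp (l * f x)) ≤ C / 2 * l ^ 2 * ∑ x, exp (l * f x) := by
  set g : Fin n → (Fin n → Bool) → ℝ := fun i x =>
    max (f x - f (flipAt i x)) 0 ^ 2 * exp (l * f x)
  have hscale : ∀ a b, max (l * a - l * b) 0 = l * max (a - b) 0 := fun a b => by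
    rw [← mul_sub, mul_max_of_nonneg _ _ hl, mul_zero]
  have hedge : ∀ i x, twoPointEnt (exp (l * f x)) (exp (l * f (flipAt i x))) ≤
      l ^ 2 / 4 * g i x + l ^ 2 / 4 * g i (flipAt i x) := fun i x => by
    have := twoPointEnt_exp_le (l * f x) (l * f (flipAt i x))
    simp only [hscale, g, flipAt_involutive i x] at this ⊢
    linarith
  calc ent (fun x => exp (l * f x))
      ≤ ∑ i, ∑ x, twoPointEnt (exp (l * f x)) (exp (l * f (flipAt i x))) :=
        ent_le_sum_twoPointEnt _ fun x => exp_pos _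
    _ ≤ ∑ i, ∑ x, (l ^ 2 / 4 * g i x + l ^ 2 / 4 * g i (flipAt i x)) := by
        gcongr with i _ x
        exact hedge i x
    _ = ∑ x, l ^ 2 / 2 * exp (l * f x) * gradPosSq f x := by
        have hsym : ∀ i, ∑ x, (l ^ 2 / 4 * g i x + l ^ 2 / 4 * g i (flipAt i x)) =
            ∑ x, l ^ 2 / 2 * g i x := fun i => by
          rw [Finset.sum_add_distrib, sum_comp_flipAt i fun x => l ^ 2 / 4 * g i x,
            ← Finset.sum_add_distrib]
          ring_nf
        rw [Finset.sum_congr rfl fun i _ => hsym i, Finset.sum_comm]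
        simp only [gradPosSq, Finset.mul_sum, g]
        exact Finset.sum_congr rfl fun x _ => Finset.sum_congr rfl fun i _ => by ring
    _ ≤ ∑ x, l ^ 2 / 2 * exp (l * f x) * C := by
        gcongr with x
        exact hgrad x
    _ = C / 2 * l ^ 2 * ∑ x, exp (l * f x) := by
        rw [Finset.mul_sum]
        exact Finset.sum_congr rfl fun x _ => by ring

theorem sum_exp_mul_le (f : (Fin n → Bool) → ℝ) {C μ : ℝ} (hgrad : ∀ x, gradPosSq f x ≤ C)
    (hmean : ∑ x, f x ≤ 2 ^ n * μ) {l : ℝ} (hl : 0 ≤ l) :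
    ∑ x, exp (l * f x) ≤ 2 ^ n * exp (l * μ + C / 2 * l ^ 2) := by
  set Z : ℝ → ℝ := fun l => ∑ x, exp (l * f x)
  set Z' : ℝ → ℝ := fun l => ∑ x, exp (l * f x) * f x
  have hZ : ∀ l, 0 < Z l := fun l => Finset.sum_pos (fun x _ => exp_pos _) univ_nonempty
  have hZ0 : Z 0 = 2 ^ n := by simp [Z]
  have hN : (0 : ℝ) < 2 ^ n := by positivity
  have hu : ∀ l, HasDerivAt (fun l => log (Z l / 2 ^ n) - C / 2 * l ^ 2)
      (Z' l / Z l - C * l) l := fun l => by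
    have hZd : HasDerivAt Z (Z' l) l :=
      HasDerivAt.fun_sum fun x _ => (hasDerivAt_mul_const (f x)).exp
    refine (((hZd.div_const (2 ^ n)).log (div_pos (hZ l) hN).ne').sub
      ((hasDerivAt_pow 2 l).const_mul (C / 2))).congr_deriv ?_
    rw [div_div_div_cancel_right₀ hN.ne']
    ring
  -- `ent_exp_mul_le` is exactly the differential inequality `l * u' l ≤ u l` for `u` above.
  have hent : ∀ l, 0 < l → l * (Z' l / Z l - C * l) ≤ log (Z l / 2 ^ n) - C / 2 * l ^ 2 :=
    fun l hl => by
      have h := ent_exp_mul_le f hgrad hl.le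
      have hlog : ∀ x, exp (l * f x) * log (exp (l * f x)) = l * (exp (l * f x) * f x) :=
        fun x => by rw [log_exp]; ring
      simp only [ent, hlog, ← Finset.mul_sum] at h
      change l * Z' l - Z l * log (Z l / 2 ^ n) ≤ C / 2 * l ^ 2 * Z l at h
      have hratio : l * Z' l / Z l ≤ log (Z l / 2 ^ n) + C / 2 * l ^ 2 := by
        rw [div_le_iff₀ (hZ l)]
        linarith
      calc l * (Z' l / Z l - C * l) = l * Z' l / Z l - C * l ^ 2 := by ring
        _ ≤ log (Z l / 2 ^ n) - C / 2 * l ^ 2 := by linarith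
  have hmain := le_deriv_zero_mul_of_mul_deriv_le hu (by simp [hZ0]) hent hl
  have hmean' : Z' 0 / Z 0 ≤ μ := by
    simpa [Z', hZ0, div_le_iff₀ hN, mul_comm] using hmean
  have hlog : log (Z l / 2 ^ n) ≤ l * μ + C / 2 * l ^ 2 := by
    have := mul_le_mul_of_nonneg_right hmean' hl
    simp only [mul_zero, sub_zero] at hmain
    linarith
  rw [log_le_iff_le_exp (div_pos (hZ l) hN), div_le_iff₀' hN] at hlog
  exact hlog

theorem card_lt_add_le (f : (Fin n → Bool) → ℝ) {C μ r : ℝ} (hC : 0 < C)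
    (hgrad : ∀ x, gradPosSq f x ≤ C) (hmean : ∑ x, f x ≤ 2 ^ n * μ) (hr : 0 ≤ r) :
    (#{x | μ + r < f x} : ℝ) ≤ exp (-r ^ 2 / (2 * C)) * 2 ^ n := by
  set l := r / C
  have hl : 0 ≤ l := div_nonneg hr hC.le
  have h := (card_lt_mul_exp_le_sum_exp f (μ + r) hl).trans (sum_exp_mul_le f hgrad hmean hl)
  rw [← le_div_iff₀ (exp_pos _), mul_div_assoc, ← exp_sub] at h
  refine h.trans_eq ?_
  rw [mul_comm]
  congr 2
  simp only [l]
  field_simp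
  ring

end BoolCube

section SignedMatrixVector

open BoolCube

variable {k m n : ℕ}

lemma vnorm_eq_norm (v : Fin k → ℝ) :
    vnorm v = ‖(WithLp.toLp 2 v : EuclideanSpace ℝ (Fin k))‖ := by
  simp [vnorm, EuclideanSpace.norm_eq]

lemma vnorm_nonneg (v : Fin k → ℝ) : 0 ≤ vnorm v := sqrt_nonneg _

lemma vnorm_sq (v : Fin k → ℝ) : vnorm v ^ 2 = ∑ i, v i ^ 2 :=
  sq_sqrt (Finset.sum_nonneg fun _ _ => sq_nonneg _)

lemma sub_vnorm_mul_vnorm_le_dotProduct (a b : Fin k → ℝ) :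
    (vnorm a - vnorm b) * vnorm a ≤ a ⬝ᵥ (a - b) := by
  have h := norm_sub_norm_mul_norm_le_inner (WithLp.toLp 2 a) (WithLp.toLp 2 b)
  rwa [← WithLp.toLp_sub, EuclideanSpace.inner_toLp_toLp, star_trivial, dotProduct_comm,
    ← vnorm_eq_norm, ← vnorm_eq_norm] at h

open scoped Matrix.Norms.L2Operator in
lemma specNorm_eq_l2_opNorm (A : Matrix (Fin m) (Fin n) ℝ) : specNorm A = ‖A‖ := rfl

lemma specNorm_nonneg (A : Matrix (Fin m) (Fin n) ℝ) : 0 ≤ specNorm A := norm_nonneg _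

lemma frobNorm_nonneg (A : Matrix (Fin m) (Fin n) ℝ) : 0 ≤ frobNorm A := sqrt_nonneg _

lemma vnorm_mulVec_le (A : Matrix (Fin m) (Fin n) ℝ) (v : Fin n → ℝ) :
    vnorm (A *ᵥ v) ≤ specNorm A * vnorm v := by
  rw [vnorm_eq_norm, vnorm_eq_norm]
  exact (LinearMap.toContinuousLinearMap (toEuclideanLin A)).le_opNorm (WithLp.toLp 2 v)

open scoped Matrix.Norms.L2Operator in
lemma specNorm_transpose (A : Matrix (Fin m) (Fin n) ℝ) : specNorm Aᵀ = specNorm A := by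
  rw [specNorm_eq_l2_opNorm, specNorm_eq_l2_opNorm, ← conjTranspose_eq_transpose_of_trivial,
    l2_opNorm_conjTranspose]

lemma abs_signVec (s : Fin n → Bool) (k : Fin n) : |signVec s k| = 1 := by
  unfold signVec; split <;> simp

lemma signVec_flipAt_self (s : Fin n → Bool) (i : Fin n) :
    signVec (flipAt i s) i = -signVec s i := by
  cases h : s i <;> simp [signVec, flipAt, h]

lemma signVec_flipAt_of_ne (s : Fin n → Bool) {i k : Fin n} (hk : k ≠ i) :
    signVec (flipAt i s) k = signVec s k := by
  simp [signVec, flipAt, hk]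

lemma signVec_sub_signVec_flipAt (s : Fin n → Bool) (i : Fin n) :
    signVec s - signVec (flipAt i s) = Pi.single i (2 * signVec s i) := by
  ext k
  rcases eq_or_ne k i with rfl | hk
  · rw [Pi.sub_apply, signVec_flipAt_self, Pi.single_eq_same]
    ring
  · rw [Pi.sub_apply, signVec_flipAt_of_ne s hk, Pi.single_eq_of_ne hk, sub_self]

lemma gradPosSq_vnorm_mulVec_signVec_le (A : Matrix (Fin m) (Fin n) ℝ) (s : Fin n → Bool) :
    gradPosSq (fun s => vnorm (A *ᵥ signVec s)) s ≤ 4 * specNorm A ^ 2 := by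
  set a := A *ᵥ signVec s
  set g := Aᵀ *ᵥ a
  have hstep : ∀ i, max (vnorm a - vnorm (A *ᵥ signVec (flipAt i s))) 0 * vnorm a ≤ 2 * |g i| := by
    intro i
    have hdot : a ⬝ᵥ (a - A *ᵥ signVec (flipAt i s)) = g i * (2 * signVec s i) := by
      rw [← mulVec_sub, signVec_sub_signVec_flipAt, dotProduct_mulVec, dotProduct_single,
        ← mulVec_transpose]
    have hle : g i * (2 * signVec s i) ≤ 2 * |g i| := by
      calc g i * (2 * signVec s i) ≤ |g i * (2 * signVec s i)| := le_abs_self _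
        _ = 2 * |g i| := by rw [abs_mul, abs_mul, abs_signVec, abs_two]; ring
    rw [max_mul_of_nonneg _ _ (vnorm_nonneg a), zero_mul]
    exact max_le ((sub_vnorm_mul_vnorm_le_dotProduct _ _).trans (hdot ▸ hle)) (by positivity)
  have hsum : gradPosSq (fun s => vnorm (A *ᵥ signVec s)) s * vnorm a ^ 2 ≤
      4 * (specNorm A * vnorm a) ^ 2 := by
    calc gradPosSq (fun s => vnorm (A *ᵥ signVec s)) s * vnorm a ^ 2
        ≤ ∑ i, (2 * |g i|) ^ 2 := by
          rw [gradPosSq, Finset.sum_mul]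
          gcongr with i
          rw [← mul_pow]
          exact pow_le_pow_left₀ (mul_nonneg (le_max_right _ _) (vnorm_nonneg a)) (hstep i) 2
      _ = 4 * vnorm g ^ 2 := by simp [vnorm_sq, mul_pow, Finset.mul_sum]; norm_num
      _ ≤ 4 * (specNorm A * vnorm a) ^ 2 := by
          gcongr
          · exact vnorm_nonneg g
          · simpa [specNorm_transpose] using vnorm_mulVec_le Aᵀ a
  rcases (vnorm_nonneg a).eq_or_lt with ha | ha
  · have hzero : gradPosSq (fun s => vnorm (A *ᵥ signVec s)) s = 0 :=
      Finset.sum_eq_zero fun i _ => by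
        simp only [a] at ha
        simp [← ha, vnorm_nonneg]
    rw [hzero]
    positivity
  · rw [mul_pow, ← mul_assoc] at hsum
    exact le_of_mul_le_mul_right hsum (by positivity)

lemma sum_signVec_mul_signVec (k l : Fin n) :
    ∑ s : Fin n → Bool, signVec s k * signVec s l = if k = l then 2 ^ n else 0 := by
  split_ifs with hkl
  · subst hkl
    have hsq : ∀ s : Fin n → Bool, signVec s k * signVec s k = 1 := fun s => by
      unfold signVec; split <;> norm_num
    simp [hsq]
  · have hflip : ∀ s, signVec (flipAt k s) k * signVec (flipAt k s) l =
        -(signVec s k * signVec s l) := fun s => by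
      rw [signVec_flipAt_self, signVec_flipAt_of_ne s (Ne.symm hkl), neg_mul]
    have := sum_comp_flipAt k fun s => signVec s k * signVec s l
    simp only [hflip, Finset.sum_neg_distrib] at this
    linarith

lemma sum_dotProduct_signVec_sq (a : Fin n → ℝ) :
    ∑ s : Fin n → Bool, (a ⬝ᵥ signVec s) ^ 2 = 2 ^ n * ∑ k, a k ^ 2 := by
  calc ∑ s : Fin n → Bool, (a ⬝ᵥ signVec s) ^ 2
      = ∑ s : Fin n → Bool, ∑ k, ∑ l, a k * a l * (signVec s k * signVec s l) := by
        simp only [dotProduct, sq, Finset.sum_mul_sum]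
        exact Finset.sum_congr rfl fun s _ => Finset.sum_congr rfl fun k _ =>
          Finset.sum_congr rfl fun l _ => by ring
    _ = ∑ k, ∑ l, a k * a l * ∑ s : Fin n → Bool, signVec s k * signVec s l := by
        rw [Finset.sum_comm]
        simp only [Finset.mul_sum]
        exact Finset.sum_congr rfl fun k _ => Finset.sum_comm
    _ = 2 ^ n * ∑ k, a k ^ 2 := by
        simp [sum_signVec_mul_signVec, Finset.mul_sum, sq, mul_comm]

lemma frobNorm_sq (A : Matrix (Fin m) (Fin n) ℝ) : frobNorm A ^ 2 = ∑ i, ∑ j, A i j ^ 2 :=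
  sq_sqrt (Finset.sum_nonneg fun _ _ => Finset.sum_nonneg fun _ _ => sq_nonneg _)

lemma sum_vnorm_mulVec_signVec_sq (A : Matrix (Fin m) (Fin n) ℝ) :
    ∑ s : Fin n → Bool, vnorm (A *ᵥ signVec s) ^ 2 = 2 ^ n * frobNorm A ^ 2 := by
  simp only [vnorm_sq, frobNorm_sq]
  rw [Finset.sum_comm, Finset.mul_sum]
  exact Finset.sum_congr rfl fun i _ => sum_dotProduct_signVec_sq (A i)

lemma sum_vnorm_mulVec_signVec_le (A : Matrix (Fin m) (Fin n) ℝ) :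
    ∑ s : Fin n → Bool, vnorm (A *ᵥ signVec s) ≤ 2 ^ n * frobNorm A := by
  have hcs := sq_sum_le_card_mul_sum_sq (s := univ)
    (f := fun s : Fin n → Bool => vnorm (A *ᵥ signVec s))
  rw [sum_vnorm_mulVec_signVec_sq, card_univ, Fintype.card_fun, Fintype.card_bool,
    Fintype.card_fin] at hcs
  have := frobNorm_nonneg A
  exact le_of_sq_le_sq (hcs.trans_eq (by push_cast; ring)) (by positivity)

theorem card_frobNorm_add_lt_vnorm_mulVec_signVec_le (A : Matrix (Fin m) (Fin n) ℝ) {t : ℝ}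
    (ht : 0 ≤ t) :
    (#{s | frobNorm A + t * specNorm A < vnorm (A *ᵥ signVec s)} : ℝ) ≤
      exp (-t ^ 2 / 8) * 2 ^ n := by
  rcases (specNorm_nonneg A).eq_or_lt with hS | hS
  · have hempty : ∀ s, ¬ frobNorm A + t * specNorm A < vnorm (A *ᵥ signVec s) := fun s h => by
      have := vnorm_mulVec_le A (signVec s)
      rw [← hS, zero_mul] at this
      rw [← hS, mul_zero, add_zero] at h
      linarith [frobNorm_nonneg A]
    simp only [hempty, Finset.filter_false, card_empty, Nat.cast_zero]
    positivity
  · have h := card_lt_add_le (fun s => vnorm (A *ᵥ signVec s)) (C := 4 * specNorm A ^ 2)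
      (by positivity) (gradPosSq_vnorm_mulVec_signVec_le A) (sum_vnorm_mulVec_signVec_le A)
      (mul_nonneg ht hS.le)
    refine h.trans_eq ?_
    congr 2
    field_simp
    ring

lemma frobNorm_mul_diagonal_le (A : Matrix (Fin m) (Fin n) ℝ) {d : Fin n → ℝ} {c : ℝ}
    (hc : 0 ≤ c) (hd : ∀ k, |d k| ≤ c) : frobNorm (A * diagonal d) ≤ c * frobNorm A := by
  rw [frobNorm, frobNorm, ← sqrt_sq hc, ← sqrt_mul (sq_nonneg c)]
  refine sqrt_le_sqrt ?_
  simp only [mul_diagonal, Finset.mul_sum, mul_pow]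
  refine Finset.sum_le_sum fun i _ => Finset.sum_le_sum fun k _ => ?_
  rw [mul_comm, ← sq_abs (d k)]
  exact mul_le_mul_of_nonneg_right (pow_le_pow_left₀ (abs_nonneg _) (hd k) 2) (sq_nonneg _)

open scoped Matrix.Norms.L2Operator in
lemma specNorm_mul_diagonal_le (A : Matrix (Fin m) (Fin n) ℝ) {d : Fin n → ℝ} {c : ℝ}
    (hc : 0 ≤ c) (hd : ∀ k, |d k| ≤ c) : specNorm (A * diagonal d) ≤ c * specNorm A := by
  rw [specNorm_eq_l2_opNorm, specNorm_eq_l2_opNorm, mul_comm c]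
  refine (l2_opNorm_mul A (diagonal d)).trans (mul_le_mul_of_nonneg_left ?_ (norm_nonneg A))
  rw [l2_opNorm_diagonal]
  exact (pi_norm_le_iff_of_nonneg hc).2 fun k => (Real.norm_eq_abs _).trans_le (hd k)

lemma mul_diagonal_mul_transpose_col (A : Matrix (Fin m) (Fin n) ℝ) (H : Matrix (Fin n) (Fin n) ℝ)
    (d : Fin n → ℝ) (j : Fin n) :
    (fun i => (A * diagonal d * Hᵀ) i j) = (A * diagonal (H j)) *ᵥ d := by
  ext i
  rw [mul_apply]
  simp only [mulVec, dotProduct, mul_diagonal, transpose_apply]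
  exact Finset.sum_congr rfl fun k _ => by ring

end SignedMatrixVector

theorem srht_equalizes_column_norms_general {m n : ℕ} (A : Matrix (Fin m) (Fin n) ℝ)
    (H : Matrix (Fin n) (Fin n) ℝ)
    (hHent : ∀ i j, H i j = (Real.sqrt n)⁻¹ ∨ H i j = -(Real.sqrt n)⁻¹)
    (t : ℝ) (ht : 0 ≤ t) :
    (1 - (n : ℝ) * Real.exp (-t ^ 2 / 8)) * 2 ^ n ≤
      (Nat.card {s : Fin n → Bool //
        ∀ j, vnorm (fun i => (A * Matrix.diagonal (signVec s) * Hᵀ) i j) ≤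
          (Real.sqrt n)⁻¹ * frobNorm A + t * (Real.sqrt n)⁻¹ * specNorm A} : ℝ) := by
  set c := (Real.sqrt n)⁻¹
  have hc : 0 ≤ c := inv_nonneg.2 (sqrt_nonneg _)
  have hH : ∀ j k, |H j k| ≤ c := fun j k => by
    rcases hHent j k with h | h <;> simp [h, abs_of_nonneg hc]
  have hcol : ∀ j, (#{s : Fin n → Bool |
      ¬ vnorm (fun i => (A * Matrix.diagonal (signVec s) * Hᵀ) i j) ≤
        c * frobNorm A + t * c * specNorm A} : ℝ) ≤ exp (-t ^ 2 / 8) * 2 ^ n := fun j => by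
    have hbound : frobNorm (A * diagonal (H j)) + t * specNorm (A * diagonal (H j)) ≤
        c * frobNorm A + t * c * specNorm A := by
      have := mul_le_mul_of_nonneg_left (specNorm_mul_diagonal_le A hc (hH j)) ht
      linarith [frobNorm_mul_diagonal_le A hc (hH j)]
    refine le_trans ?_ (card_frobNorm_add_lt_vnorm_mulVec_signVec_le (A * diagonal (H j)) ht)
    gcongr with s
    rw [mul_diagonal_mul_transpose_col, not_le]
    exact hbound.trans_lt
  have hcount := card_sub_mul_le_card_forall _ hcol
  rw [Nat.card_eq_fintype_card, Fintype.card_subtype]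
  simp only [Fintype.card_fun, Fintype.card_bool, Fintype.card_fin, Nat.cast_pow] at hcount
  push_cast at hcount
  refine le_of_eq_of_le (by ring) (hcount.trans_eq ?_)
  congr

/-- SRHT equalization of column norms: for a normalized Hadamard matrix `H` and a
uniformly random vector of independent signs `D = diag(±1)`, with probability at
least `1 − n e^{−t²/8}` every column of `A D Hᵀ` has norm at most
`n^{−1/2}‖A‖_F + t n^{−1/2}‖A‖₂`.  (Probability over the `2^n` sign vectors.) -/
theorem srht_equalizes_column_norms {m n : ℕ} (A : Matrix (Fin m) (Fin n) ℝ)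
    (H : Matrix (Fin n) (Fin n) ℝ) (hH : H * Hᵀ = 1)
    (hHent : ∀ i j, H i j = (Real.sqrt n)⁻¹ ∨ H i j = -(Real.sqrt n)⁻¹)
    (t : ℝ) (ht : 0 ≤ t) :
    (1 - (n : ℝ) * Real.exp (-t ^ 2 / 8)) * 2 ^ n ≤
      (Nat.card {s : Fin n → Bool //
        ∀ j, vnorm (fun i => (A * Matrix.diagonal (signVec s) * Hᵀ) i j) ≤
          (Real.sqrt n)⁻¹ * frobNorm A + t * (Real.sqrt n)⁻¹ * specNorm A} : ℝ) :=
  srht_equalizes_column_norms_general A H hHent t ht
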